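/- Let F ⊆ ℝ^n be nonempty, f : ℝ^n → ℝ attain its minimum v* over F, and F⁺ = {(x, f(x)) : x ∈ F}. Suppose {Fₙ⁺} is a sequence of subsets of F⁺ such that every point of conv(F⁺) is a limit of points chosen from conv(Fₙ⁺) (i.e., conv(F⁺) is contained in the topological limit of the sets conv(Fₙ⁺)). Define vₙ* = inf{φ : (x,φ) ∈ conv(Fₙ⁺)}. Then vₙ* → v* as n → ∞. -/
import Mathlib


open Filter Topology

/-- Proposition 2: if the convex hulls of the sampled graph sets `Fₙ⁺ ⊆ F⁺`
become dense in `conv F⁺` (every point of `conv F⁺` is a limit of points from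
`conv Fₙ⁺`), then the sampled optimal values `vₙ* = inf{φ : (x,φ) ∈ conv Fₙ⁺}`
converge to the true optimal value `v*`. -/
theorem stmt_2 (n : ℕ) (F : Set (Fin n → ℝ)) (hF : F.Nonempty)
    (f : (Fin n → ℝ) → ℝ) (v : ℝ) (hmin : IsLeast (f '' F) v)
    (Fp : ℕ → Set ((Fin n → ℝ) × ℝ))
    (hsub : ∀ k, Fp k ⊆ (fun z => (z, f z)) '' F)
    (hdense : ∀ p ∈ convexHull ℝ ((fun z => (z, f z)) '' F),
      ∃ q : ℕ → (Fin n → ℝ) × ℝ,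
        (∀ k, q k ∈ convexHull ℝ (Fp k)) ∧ Tendsto q atTop (𝓝 p)) :
    Tendsto (fun k => sInf {φ : ℝ | ∃ x : Fin n → ℝ,
      (x, φ) ∈ convexHull ℝ (Fp k)}) atTop (𝓝 v) := by
  obtain ⟨x₀, hx₀F, hx₀v⟩ := hmin.1
  -- every point of conv F⁺ has second coordinate ≥ v
  have hlow : ∀ p ∈ convexHull ℝ ((fun z => (z, f z)) '' F), v ≤ p.2 := by
    intro p hp
    have hconv : Convex ℝ {p : (Fin n → ℝ) × ℝ | v ≤ p.2} := by
      have := (convex_Ici v).linear_preimage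
        (LinearMap.snd ℝ (Fin n → ℝ) ℝ)
      simpa [Set.preimage] using this
    have hsubset : (fun z => (z, f z)) '' F ⊆ {p : (Fin n → ℝ) × ℝ | v ≤ p.2} := by
      rintro _ ⟨z, hz, rfl⟩
      exact hmin.2 ⟨z, hz, rfl⟩
    exact convexHull_min hsubset hconv hp
  have hconvsub : ∀ k, convexHull ℝ (Fp k) ⊆
      convexHull ℝ ((fun z => (z, f z)) '' F) :=
    fun k => convexHull_mono (hsub k)
  have hp0 : ((x₀, v) : (Fin n → ℝ) × ℝ) ∈
      convexHull ℝ ((fun z => (z, f z)) '' F) := by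
    apply subset_convexHull
    exact ⟨x₀, hx₀F, by simp [hx₀v]⟩
  obtain ⟨q, hq, hqt⟩ := hdense _ hp0
  set S : ℕ → Set ℝ := fun k => {φ : ℝ | ∃ x : Fin n → ℝ,
      (x, φ) ∈ convexHull ℝ (Fp k)} with hS
  have hmem : ∀ k, (q k).2 ∈ S k := fun k => ⟨(q k).1, hq k⟩
  have hbdd : ∀ k, ∀ φ ∈ S k, v ≤ φ := by
    rintro k φ ⟨x, hx⟩
    exact hlow _ (hconvsub k hx)
  have hlb : ∀ k, v ≤ sInf (S k) := fun k =>
    le_csInf ⟨_, hmem k⟩ (hbdd k)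
  have hub : ∀ k, sInf (S k) ≤ (q k).2 := fun k =>
    csInf_le ⟨v, hbdd k⟩ (hmem k)
  have hq2 : Tendsto (fun k => (q k).2) atTop (𝓝 v) :=
    (continuous_snd.tendsto _).comp hqt
  exact tendsto_of_tendsto_of_tendsto_of_le_of_le tendsto_const_nhds hq2 hlb hub
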